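/- In an extremally disconnected space X, if {V_k : k ∈ ℕ} is a tail semi-open cover of X and for each k, {V_k = V^k_1 ⊆ V^k_2 ⊆ …} is an increasing semi-open cover of X starting at V_k, then the family {V^k_m : k, m ∈ ℕ} is again a tail semi-open cover of X. -/
import Mathlib


open Set

variable {X : Type*} [TopologicalSpace X]

/-- A set is semi-open if it is contained in the closure of its interior. -/
def SemiOpen (A : Set X) : Prop := A ⊆ closure (interior A)

/-- A family of sets is a semi-open cover if all members are semi-open and it covers the space. -/
def IsSemiOpenCover (U : Set (Set X)) : Prop := (∀ A ∈ U, SemiOpen A) ∧ ⋃₀ U = univ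

/-- The semi-Menger property `S_fin(sO, sO)`. -/
def SFinSO (X : Type*) [TopologicalSpace X] : Prop :=
  ∀ U : ℕ → Set (Set X), (∀ n, IsSemiOpenCover (U n)) →
    ∃ V : ℕ → Set (Set X), (∀ n, V n ⊆ U n ∧ (V n).Finite) ∧ ⋃₀ (⋃ n, V n) = univ

/-- The semi-Rothberger property `S_1(sO, sO)`. -/
def S1SO (X : Type*) [TopologicalSpace X] : Prop :=
  ∀ U : ℕ → Set (Set X), (∀ n, IsSemiOpenCover (U n)) →
    ∃ V : ℕ → Set X, (∀ n, V n ∈ U n) ∧ (⋃ n, V n) = univ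

/-- A strategy for Alice in `G_fin(sO,sO)` (a function from finite histories of Bob's moves
to semi-open covers) is winning if every play following it is lost by Bob. -/
def AliceWinningFin (σ : List (Set (Set X)) → Set (Set X)) : Prop :=
  (∀ h, IsSemiOpenCover (σ h)) ∧
  ∀ b : ℕ → Set (Set X),
    (∀ n, b n ⊆ σ (List.ofFn fun i : Fin n => b i) ∧ (b n).Finite) →
    ⋃₀ (⋃ n, b n) ≠ univ

/-- A strategy for Alice in `G_1(sO,sO)` is winning if every play following it is lost by Bob. -/
def AliceWinningOne (σ : List (Set X) → Set (Set X)) : Prop :=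
  (∀ h, IsSemiOpenCover (σ h)) ∧
  ∀ b : ℕ → Set X,
    (∀ n, b n ∈ σ (List.ofFn fun i : Fin n => b i)) →
    (⋃ n, b n) ≠ univ

/-- A family indexed by `ι` is a tail semi-open cover if the intersection of every cofinite
subfamily is semi-open and these intersections cover the space. -/
def TailSemiCover {ι : Type*} (U : ι → Set X) : Prop :=
  (∀ I : Set ι, Iᶜ.Finite → SemiOpen (⋂ i ∈ I, U i)) ∧
  ∀ x : X, ∃ I : Set ι, Iᶜ.Finite ∧ x ∈ ⋂ i ∈ I, U i

lemma semiOpen_univ : SemiOpen (univ : Set X) := by simp [SemiOpen]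

lemma SemiOpen.inter [ExtremallyDisconnected X] {A B : Set X}
    (hA : SemiOpen A) (hB : SemiOpen B) : SemiOpen (A ∩ B) := by
  have hcl : IsOpen (closure (interior A)) :=
    ExtremallyDisconnected.open_closure _ isOpen_interior
  calc A ∩ B ⊆ closure (interior A) ∩ closure (interior B) := inter_subset_inter hA hB
    _ ⊆ closure (closure (interior A) ∩ interior B) := hcl.inter_closure
    _ ⊆ closure (closure (interior B ∩ interior A)) := by
        apply closure_mono
        rw [inter_comm]
        exact isOpen_interior.inter_closure
    _ = closure (interior (A ∩ B)) := by rw [closure_closure, interior_inter, inter_comm]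

lemma semiOpen_finset_iInter [ExtremallyDisconnected X] (s : Finset ℕ) (f : ℕ → Set X)
    (h : ∀ k ∈ s, SemiOpen (f k)) : SemiOpen (⋂ k ∈ s, f k) := by
  classical
  induction s using Finset.induction_on with
  | empty => simpa using (semiOpen_univ : SemiOpen (univ : Set X))
  | @insert a s hk ih =>
    rw [Finset.set_biInter_insert]
    exact (h a (Finset.mem_insert_self a s)).inter
      (ih fun k hks => h k (Finset.mem_insert_of_mem hks))

theorem stmt17 [ExtremallyDisconnected X] (V : ℕ → Set X) (hV : TailSemiCover V)
    (W : ℕ → ℕ → Set X) (hstart : ∀ k, W k 0 = V k)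
    (hmono : ∀ k, Monotone (W k)) (hso : ∀ k m, SemiOpen (W k m))
    (hcov : ∀ k, (⋃ m, W k m) = univ) :
    TailSemiCover (fun p : ℕ × ℕ => W p.1 p.2) := by
  classical
  constructor
  · intro I hI
    -- every fiber is nonempty
    have hfib : ∀ k, ∃ m, (k, m) ∈ I := by
      intro k
      by_contra h
      push_neg at h
      have : Iᶜ.Infinite := by
        exact Set.infinite_of_injective_forall_mem
          (f := fun m : ℕ => (k, m)) (fun a b hab => (Prod.ext_iff.mp hab).2) h
      exact this hI
    set n : ℕ → ℕ := fun k => Nat.find (hfib k) with hn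
    have hkey : (⋂ p ∈ I, W p.1 p.2) = ⋂ k, W k (n k) := by
      apply Subset.antisymm
      · intro x hx
        simp only [mem_iInter] at hx ⊢
        intro k
        exact hx (k, n k) (Nat.find_spec (hfib k))
      · intro x hx
        simp only [mem_iInter] at hx ⊢
        rintro ⟨k, m⟩ hkm
        exact hmono k (Nat.find_min' (hfib k) hkm) (hx k)
    rw [hkey]
    set F : Set ℕ := {k | n k ≠ 0} with hF
    have hFfin : F.Finite := by
      have : F ⊆ (fun k => (k, 0)) ⁻¹' Iᶜ := by
        intro k hk
        simp only [mem_preimage, mem_compl_iff]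
        intro h0
        exact hk (Nat.find_eq_zero (hfib k) |>.mpr h0)
      exact Set.Finite.subset (hI.preimage (fun a _ b _ hab => (Prod.ext_iff.mp hab).1)) this
    have hsplit : (⋂ k, W k (n k)) = (⋂ k ∈ Fᶜ, V k) ∩ ⋂ k ∈ hFfin.toFinset, W k (n k) := by
      apply Subset.antisymm
      · intro x hx
        simp only [mem_iInter, mem_inter_iff] at hx ⊢
        refine ⟨fun k hk => ?_, fun k _ => hx k⟩
        have h0 : n k = 0 := by simpa [hF] using hk
        have := hx k
        rwa [h0, hstart k] at this
      · rintro x ⟨h1, h2⟩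
        simp only [mem_iInter] at h1 h2 ⊢
        intro k
        by_cases hk : k ∈ F
        · exact h2 k (hFfin.mem_toFinset.mpr hk)
        · have h0 : n k = 0 := by simpa [hF] using hk
          rw [h0, hstart k]
          exact h1 k hk
    rw [hsplit]
    exact (hV.1 Fᶜ (by rwa [compl_compl])).inter
      (semiOpen_finset_iInter _ _ fun k _ => hso k (n k))
  · intro x
    obtain ⟨I, hIfin, hxI⟩ := hV.2 x
    have hm : ∀ k, ∃ m, x ∈ W k m := by
      intro k
      have : x ∈ ⋃ m, W k m := by rw [hcov k]; trivial
      exact mem_iUnion.mp this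
    choose m hmx using hm
    refine ⟨{p : ℕ × ℕ | p.1 ∈ I ∨ m p.1 ≤ p.2}, ?_, ?_⟩
    · have hsub : {p : ℕ × ℕ | p.1 ∈ I ∨ m p.1 ≤ p.2}ᶜ ⊆ ⋃ k ∈ Iᶜ, {k} ×ˢ Iio (m k) := by
        rintro ⟨k, mm⟩ hp
        simp only [mem_compl_iff, mem_setOf_eq, not_or, not_le] at hp
        simp only [mem_iUnion, mem_prod, mem_singleton_iff, mem_Iio]
        exact ⟨k, hp.1, rfl, hp.2⟩
      exact Set.Finite.subset (hIfin.biUnion fun k _ => (finite_singleton k).prod (finite_Iio _)) hsub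
    · simp only [mem_iInter, mem_setOf_eq] at hxI ⊢
      rintro ⟨k, mm⟩ (hk | hk)
      · have : x ∈ V k := hxI k hk
        rw [← hstart k] at this
        exact hmono k (Nat.zero_le mm) this
      · exact hmono k hk (hmx k)
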